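/- Let G be a finite group with Sylow p-subgroup P and suppose the derived subgroup P' is normal in G and G/P' is p-nilpotent. If in addition P' ≤ Φ(P), then G is p-nilpotent. -/

import Mathlib

/-!
A normal subgroup `N` of `G` lying in `Φ(H)` for some `H ≤ G` lies in `Φ(G)`: if a maximal
subgroup `M` missed `N`, then `G = NM`, so `H = N(H ∩ M)` by Dedekind's law, hence `H ≤ M` because
`N ≤ Φ(H)` is non-generating in `H`, and then `N ≤ M` after all. Applied to `H = P` and `N = P'`,
it remains to lift `p`-nilpotency from `G/N` to `G` for a normal `p`-subgroup `N ≤ Φ(G)`.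

Going through `G/Z(N)` reduces this to abelian `N`. Let `K/N` be the normal `p`-complement of
`G/N`. By Schur–Zassenhaus `N` has a complement `H` in `K`, and all such complements are conjugate
under `N`; so the Frattini argument gives `G = N_G(H) N`, whence `N_G(H) = G` as `N ≤ Φ(G)`.
Thus `H` is a normal subgroup of `p'`-order and `p`-power index in `G`.
-/

/-- A group is `p`-nilpotent if it has a normal `p`-complement. -/
def IsPNilpotent (p : ℕ) (G : Type*) [Group G] : Prop :=
  ∃ (P : Sylow p G) (K : Subgroup G), K.Normal ∧ Subgroup.IsComplement' (P : Subgroup G) K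

section

open Subgroup Pointwise MulAction

variable {G : Type*} [Group G]

theorem Subgroup.le_frattini_of_le_map_frattini {H N : Subgroup G} [N.Normal]
    [IsCoatomic (Subgroup H)] (hN : N ≤ (frattini H).map H.subtype) : N ≤ frattini G := by
  refine le_iInf₂ fun M hM => ?_
  by_contra hNM
  have hNM_top : N ⊔ M = ⊤ := hM.2 _ (lt_of_le_of_ne le_sup_right fun h => hNM (h ▸ le_sup_left))
  have hHM : M.subgroupOf H ⊔ frattini H = ⊤ := by
    rw [sup_comm]
    refine eq_top_iff.mpr fun x _ => ?_
    obtain ⟨n, hn, m, hm, hx⟩ : (x : G) ∈ (N : Set G) * M := by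
      rw [← normal_mul, hNM_top]
      exact mem_top _
    obtain ⟨n', hn', rfl⟩ := hN hn
    have hmH : m ∈ H := by
      rw [← inv_mul_eq_of_eq_mul hx.symm]
      exact mul_mem (inv_mem n'.2) x.2
    rw [show x = n' * ⟨m, hmH⟩ from Subtype.ext hx.symm]
    exact mul_mem_sup hn' (show _ ∈ M.subgroupOf H from hm)
  exact hNM <| (hN.trans (map_subtype_le _)).trans <|
    subgroupOf_eq_top.mp (frattini_nongenerating hHM)

namespace Subgroup.IsComplement'

variable {N H : Subgroup G} [N.Normal] [IsMulCommutative N]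

def toQuotientDiff [N.FiniteIndex] (h : IsComplement' N H) : N.QuotientDiff :=
  Quotient.mk'' ⟨H, h.symm⟩

variable [Finite G]

theorem eq_stabilizer (hco : (Nat.card N).Coprime N.index) (h : IsComplement' N H) :
    H = stabilizer G h.toQuotientDiff := by
  have hle : H ≤ stabilizer G h.toQuotientDiff := fun g hg =>
    congrArg Quotient.mk'' (Subtype.ext (op_smul_coe_set (inv_mem hg)))
  refine eq_of_le_of_card_ge hle (Nat.le_of_mul_le_mul_left ?_ (Nat.card_pos (α := N)))
  rw [h.card_mul_card, (isComplement'_stabilizer_of_coprime hco).card_mul_card]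

theorem exists_conj_smul_eq {H' : Subgroup G} (hco : (Nat.card N).Coprime N.index)
    (h : IsComplement' N H) (h' : IsComplement' N H') :
    ∃ n ∈ N, MulAut.conj n • H = H' := by
  obtain ⟨n, hn⟩ := exists_smul_eq hco h.toQuotientDiff h'.toQuotientDiff
  refine ⟨n, n.2, ?_⟩
  rw [h.eq_stabilizer hco, h'.eq_stabilizer hco, ← hn]
  exact (stabilizer_smul_eq_stabilizer_map_conj (n : G) _).symm

end Subgroup.IsComplement'

theorem Subgroup.map_subtype_conjNormal_smul {K : Subgroup G} [K.Normal] (g : G)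
    (H : Subgroup K) :
    (MulAut.conjNormal (H := K) g • H).map K.subtype = MulAut.conj g • H.map K.subtype := by
  change map _ (map (MulAut.conjNormal g).toMonoidHom H) = map (MulAut.conj g).toMonoidHom _
  rw [map_map, map_map]
  rfl

/-- Frattini's argument: every `G`-conjugate of `H` is again a complement of `N` in `K`, hence an
`N`-conjugate of `H`. -/
theorem Subgroup.normalizer_map_subtype_sup_eq_top [Finite G] {N K : Subgroup G} [N.Normal]
    [K.Normal] [IsMulCommutative N] {H : Subgroup K}
    (hco : (Nat.card (N.subgroupOf K)).Coprime (N.subgroupOf K).index)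
    (hH : IsComplement' (N.subgroupOf K) H) :
    normalizer (H.map K.subtype : Set G) ⊔ N = ⊤ := by
  refine eq_top_iff.mpr fun g _ => ?_
  have hH' : IsComplement' (N.subgroupOf K) (MulAut.conjNormal (H := K) g • H) := by
    refine isComplement'_of_coprime ?_ ?_ <;> rw [← Nat.card_congr (equivSMul _ H).toEquiv]
    exacts [hH.card_mul_card, hH.symm.index_eq_card ▸ hco]
  obtain ⟨n, hn, hconj⟩ := hH.exists_conj_smul_eq hco hH'
  replace hconj := congrArg (map K.subtype : Subgroup K → Subgroup G) hconj
  rw [← MulAut.conjNormal_val, map_subtype_conjNormal_smul, map_subtype_conjNormal_smul] at hconj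
  have hng : (n : G)⁻¹ * g ∈ normalizer (H.map K.subtype : Set G) := by
    rw [mem_normalizer_iff_map_conj_eq]
    change MulAut.conj ((n : G)⁻¹ * g) • H.map K.subtype = _
    rw [map_mul, mul_smul, ← hconj, map_inv, inv_smul_smul]
  rw [← mul_inv_cancel_left (n : G) g, sup_comm]
  exact mul_mem_sup hn hng

section

variable {p : ℕ} [hp : Fact p.Prime]

theorem isPNilpotent_iff_exists_normal [Finite G] :
    IsPNilpotent p G ↔
      ∃ K : Subgroup G, K.Normal ∧ ¬ p ∣ Nat.card K ∧ ∃ k, Nat.card G = p ^ k * Nat.card K := by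
  constructor
  · rintro ⟨P, K, hK, hPK⟩
    obtain ⟨k, hk⟩ := P.isPGroup'.exists_card_eq
    refine ⟨K, hK, hPK.symm.index_eq_card ▸ P.not_dvd_index, k, ?_⟩
    rw [← hk, hPK.card_mul_card]
  · rintro ⟨K, hK, hpK, k, hG⟩
    obtain ⟨P⟩ : Nonempty (Sylow p G) := inferInstance
    have hP : Nat.card P = p ^ k := by
      rw [P.card_eq_multiplicity, hG,
        Nat.factorization_mul (pow_ne_zero _ hp.out.ne_zero) Nat.card_pos.ne']
      simp [hp.out.factorization_self, Nat.factorization_eq_zero_of_not_dvd hpK]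
    refine ⟨P, K, hK, isComplement'_of_coprime (by rw [hP, hG]) ?_⟩
    rw [hP]
    exact Nat.Coprime.pow_left k ((Nat.Prime.coprime_iff_not_dvd hp.out).mpr hpK)

theorem IsPNilpotent.of_mulEquiv [Finite G] {G' : Type*} [Group G'] (e : G ≃* G')
    (h : IsPNilpotent p G) : IsPNilpotent p G' := by
  have : Finite G' := Finite.of_equiv G e.toEquiv
  obtain ⟨K, hK, hpK, k, hG⟩ := isPNilpotent_iff_exists_normal.mp h
  have hcard : Nat.card (K.map e.toMonoidHom) = Nat.card K := card_map_of_injective e.injective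
  exact isPNilpotent_iff_exists_normal.mpr ⟨K.map e.toMonoidHom, hK.map _ e.surjective,
    hcard ▸ hpK, k, by rw [hcard, ← hG, Nat.card_congr e.toEquiv]⟩

theorem IsPNilpotent.of_quotient_of_isMulCommutative [Finite G] {N : Subgroup G} [N.Normal]
    [IsMulCommutative N] (hN : IsPGroup p N) (hΦ : N ≤ frattini G)
    (h : IsPNilpotent p (G ⧸ N)) : IsPNilpotent p G := by
  obtain ⟨L, hL, hpL, c, hcard⟩ := isPNilpotent_iff_exists_normal.mp h
  set K := L.comap (QuotientGroup.mk' N)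
  have hNK : N ≤ K := by
    rw [← QuotientGroup.ker_mk' N]
    exact MonoidHom.ker_le_comap _ _
  have hindex : (N.subgroupOf K).index = Nat.card L := by
    have := relIndex_ker (K := K) (QuotientGroup.mk' N)
    rwa [QuotientGroup.ker_mk', map_comap_eq_self_of_surjective (QuotientGroup.mk'_surjective N)]
      at this
  have hcardN : Nat.card (N.subgroupOf K) = Nat.card N :=
    Nat.card_congr (subgroupOfEquivOfLe hNK).toEquiv
  obtain ⟨b, hb⟩ := hN.exists_card_eq
  have hco : (Nat.card (N.subgroupOf K)).Coprime (N.subgroupOf K).index := by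
    rw [hcardN, hb, hindex]
    exact Nat.Coprime.pow_left _ ((Nat.Prime.coprime_iff_not_dvd hp.out).mpr hpL)
  obtain ⟨H, hH⟩ := exists_right_complement'_of_coprime hco
  have hHnormal : (H.map K.subtype).Normal := by
    refine normalizer_eq_top_iff.mp (frattini_nongenerating (top_le_iff.mp ?_))
    rw [← normalizer_map_subtype_sup_eq_top hco hH]
    exact sup_le_sup_left hΦ _
  have hcardH : Nat.card (H.map K.subtype) = Nat.card L := by
    rw [card_map_of_injective K.subtype_injective, ← hindex, hH.symm.index_eq_card]
  refine isPNilpotent_iff_exists_normal.mpr ⟨_, hHnormal, hcardH ▸ hpL, c + b, ?_⟩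
  rw [card_eq_card_quotient_mul_card_subgroup N, hcard, hb, hcardH]
  ring

theorem IsPNilpotent.of_quotient_of_le_frattini {G : Type*} [Group G] [Finite G]
    {N : Subgroup G} [N.Normal] (hN : IsPGroup p N) (hΦ : N ≤ frattini G)
    (h : IsPNilpotent p (G ⧸ N)) : IsPNilpotent p G := by
  induction hn : Nat.card N using Nat.strong_induction_on generalizing G with
  | _ n ih =>
  rcases subsingleton_or_nontrivial N with _ | _
  · have : IsMulCommutative N := ⟨⟨fun _ _ => Subsingleton.elim _ _⟩⟩
    exact .of_quotient_of_isMulCommutative hN hΦ h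
  set Z := (center N).map N.subtype
  have hZN : Z ≤ N := map_subtype_le _
  have : Nontrivial (center N) := hN.center_nontrivial
  have hN' : Nat.card (N.map (QuotientGroup.mk' Z)) < n := by
    have hZ : Z.subgroupOf N = center N := comap_map_eq_self_of_injective N.subtype_injective _
    rw [← hn, ← relIndex_ker, QuotientGroup.ker_mk', relIndex, hZ, ← index_mul_card (center N)]
    exact lt_mul_right (Nat.pos_of_ne_zero index_ne_zero_of_finite) Finite.one_lt_card
  have hGZ : IsPNilpotent p (G ⧸ Z) :=
    ih _ hN' (hN.map _) (map_le_iff_le_comap.mpr (hΦ.trans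
      (frattini_le_comap_frattini_of_surjective (QuotientGroup.mk'_surjective Z))))
      (.of_mulEquiv (QuotientGroup.quotientQuotientEquivQuotient Z N hZN).symm h) rfl
  exact .of_quotient_of_isMulCommutative (hN.to_le hZN) (hZN.trans hΦ) hGZ

end

end

theorem pnilpotent_of_quotient_by_derived (p : ℕ) [Fact p.Prime] (G : Type*) [Group G] [Finite G]
    (P : Sylow p G)
    (hnorm : ((commutator ↥(P : Subgroup G)).map (P : Subgroup G).subtype).Normal)
    (hquot : IsPNilpotent p (G ⧸ (commutator ↥(P : Subgroup G)).map (P : Subgroup G).subtype))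
    (hΦ : (commutator ↥(P : Subgroup G)).map (P : Subgroup G).subtype ≤
      (frattini ↥(P : Subgroup G)).map (P : Subgroup G).subtype) :
    IsPNilpotent p G :=
  .of_quotient_of_le_frattini (P.isPGroup'.to_le (Subgroup.map_subtype_le _))
    (Subgroup.le_frattini_of_le_map_frattini hΦ) hquot
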